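/- Let α be a countable ordinal and let X = ω^(α+1) + 1 with the order topology (a countable compact metrizable space), equipped with a metric d compatible with its topology. If f : X → X is a homeomorphism that is expansive with respect to d, then f has a nontrivial homoclinic point: there exist x, p ∈ X with x ≠ p, f(p) = p, and fⁿ(x) → p as n → +∞ and fⁿ(x) → p as n → −∞. -/

import Mathlib

/-!
The `α`-th Cantor–Bendixson derivative `C` of `X = [0, ω^(α+1)]` consists, up to the isolated
point `0`, of the multiples of `ω^α`; so `C` is infinite and its only accumulation point is the
top point `p`. Being defined topologically, `C` is `f`-invariant, hence `p` is fixed. By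
compactness only finitely many points of `C` lie outside any neighbourhood of `p`. Expansivity
sends every orbit through `C \ {p}` out of the ball of radius `c` about `p`, so if all these
orbits were periodic, `C` would be a finite union of finite orbits. Hence some `x ∈ C \ {p}` has
an injective orbit, and such an orbit can visit the complement of a neighbourhood of `p` only
finitely often: `fⁿ x → p` as `n → ±∞`.
-/

open Filter Set Topology Function

theorem Equiv.Perm.finite_range_zpow_apply_of_not_injective {X : Type*} {σ : Perm X} {x : X}
    (h : ¬Injective fun n : ℤ => (σ ^ n) x) : (range fun n : ℤ => (σ ^ n) x).Finite := by
  obtain ⟨i, j, hij, hne⟩ := not_injective_iff.1 h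
  have hk : IsFixedPt ⇑(σ ^ (i - j)) x := (σ ^ j).injective <| by
    rw [← mul_apply, ← zpow_add, add_sub_cancel, hij]
  have hk0 : i - j ≠ 0 := sub_ne_zero.2 hne
  refine ((finite_Ico 0 |i - j|).image fun n => (σ ^ n) x).subset ?_
  rintro _ ⟨n, rfl⟩
  refine ⟨n % (i - j), ⟨Int.emod_nonneg n hk0, Int.emod_lt_abs n hk0⟩, ?_⟩
  dsimp only
  conv_rhs => rw [← Int.emod_add_mul_ediv n (i - j), zpow_add, zpow_mul, mul_apply,
    (hk.perm_zpow _).eq]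

section DerivedSet

variable {X Y : Type*} [TopologicalSpace X] [TopologicalSpace Y]

theorem Set.Finite.derivedSet_eq_empty [T1Space X] {S : Set X} (hS : S.Finite) :
    derivedSet S = ∅ := by
  refine eq_empty_of_forall_notMem fun x hx => ?_
  obtain ⟨y, ⟨hyU, hyS⟩, hyx⟩ := accPt_iff_nhds.1 hx _
    ((hS.sdiff.isClosed.isOpen_compl).mem_nhds fun h => h.2 rfl)
  exact hyU ⟨hyS, hyx.symm⟩

theorem derivedSet_insert [T1Space X] (z : X) (S : Set X) :
    derivedSet (insert z S) = derivedSet S := by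
  rw [insert_eq, derivedSet_union, (finite_singleton z).derivedSet_eq_empty, empty_union]

theorem Topology.IsOpenEmbedding.derivedSet_preimage {e : X → Y} (he : IsOpenEmbedding e)
    (S : Set Y) : derivedSet (e ⁻¹' S) = e ⁻¹' derivedSet S := by
  ext x
  rw [mem_preimage, mem_derivedSet, mem_derivedSet, ← comap_principal, he.accPt_comap_iff]

theorem Topology.IsOpenEmbedding.apply_eq_of_derivedSet_eq_singleton {f : X → X}
    (hf : IsOpenEmbedding f) {C : Set X} (hfC : f ⁻¹' C = C) {p : X}
    (hC : derivedSet C = {p}) : f p = p := by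
  have h := hf.derivedSet_preimage C
  rw [hfC, hC] at h
  exact (h ▸ rfl : p ∈ f ⁻¹' {p})

theorem finite_diff_of_derivedSet_subset [CompactSpace X] {C : Set X} {p : X}
    (hC : derivedSet C ⊆ {p}) {U : Set X} (hU : U ∈ 𝓝 p) : (C \ U).Finite := by
  by_contra h
  obtain ⟨x, hxU, hx⟩ := Set.Infinite.exists_accPt_of_subset_isCompact h
    isOpen_interior.isClosed_compl.isCompact fun y hy hyU => hy.2 (interior_subset hyU)
  have hxp : x = p := hC (derivedSet_mono _ _ sdiff_subset hx)
  exact hxU (hxp ▸ mem_interior_iff_mem_nhds.2 hU)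

theorem Equiv.Perm.exists_tendsto_cofinite_zpow_apply [CompactSpace X] [T1Space X]
    {σ : Perm X} {C : Set X} (hσC : BijOn σ C C) {p : X}
    (hC : derivedSet C = {p}) {U : Set X} (hU : U ∈ 𝓝 p)
    (hexp : ∀ x ∈ C, x ≠ p → ∃ n : ℤ, (σ ^ n) x ∉ U) :
    ∃ x ∈ C, x ≠ p ∧ Tendsto (fun n : ℤ => (σ ^ n) x) cofinite (𝓝 p) := by
  have horbit : ∀ x ∈ C, ∀ n : ℤ, (σ ^ n) x ∈ C := fun x hx n =>
    (hσC.perm_zpow n).mapsTo hx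
  have hfin : ∀ {V}, V ∈ 𝓝 p → (C \ V).Finite := finite_diff_of_derivedSet_subset hC.subset
  suffices ∃ x ∈ C, x ≠ p ∧ Injective fun n : ℤ => (σ ^ n) x by
    obtain ⟨x, hxC, hxp, hinj⟩ := this
    refine ⟨x, hxC, hxp, fun V hV => ?_⟩
    rw [mem_map, mem_cofinite]
    exact ((hfin hV).preimage hinj.injOn).subset fun n hn => ⟨horbit x hxC n, hn⟩
  -- Otherwise every point of `C \ {p}` is periodic and, by `hexp`, lies on the orbit of one of
  -- the finitely many points of `C \ U`.
  by_contra! hper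
  have hCinf : C.Infinite := fun h => by simp [h.derivedSet_eq_empty] at hC
  refine hCinf ((((hfin hU).biUnion fun r hr =>
    finite_range_zpow_apply_of_not_injective
      (hper r hr.1 fun hrp => hr.2 (hrp ▸ mem_of_mem_nhds hU))).insert p).subset fun x hx => ?_)
  by_cases hxp : x = p
  · exact .inl hxp
  obtain ⟨n, hn⟩ := hexp x hx hxp
  refine .inr (mem_biUnion ⟨horbit x hx n, hn⟩ ⟨-n, ?_⟩)
  simp only [← mul_apply, ← zpow_add, neg_add_cancel, zpow_zero, one_apply]

end DerivedSet

/-- The Cantor–Bendixson derivatives `X^(β)`: the intersection form agrees with the usual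
recursion `X^(β+1) = (X^(β))'` because the sequence is decreasing. -/
noncomputable def iteratedDerivedSet (X : Type*) [TopologicalSpace X] (β : Ordinal) : Set X :=
  ⋂ γ < β, derivedSet (iteratedDerivedSet X γ)
termination_by β

theorem iteratedDerivedSet_eq (X : Type*) [TopologicalSpace X] (β : Ordinal) :
    iteratedDerivedSet X β = ⋂ γ < β, derivedSet (iteratedDerivedSet X γ) := by
  rw [iteratedDerivedSet]

theorem Topology.IsOpenEmbedding.iteratedDerivedSet_eq_preimage {X Y : Type*}
    [TopologicalSpace X] [TopologicalSpace Y] {e : X → Y} (he : IsOpenEmbedding e)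
    (β : Ordinal) :
    iteratedDerivedSet X β = e ⁻¹' iteratedDerivedSet Y β := by
  induction β using WellFoundedLT.induction with
  | _ β ih =>
    simp only [iteratedDerivedSet_eq X β, iteratedDerivedSet_eq Y β, preimage_iInter₂]
    exact iInter₂_congr fun γ hγ => by rw [ih γ hγ, he.derivedSet_preimage]

namespace Ordinal

open Order

theorem mul_succ_le_of_dvd_of_mul_lt {a u y : Ordinal} (hy : a ∣ y) (h : a * u < y) :
    a * succ u ≤ y := by
  obtain ⟨v, rfl⟩ := hy
  exact mul_le_mul_right (succ_le_of_lt (lt_of_mul_lt_mul_left' h)) a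

theorem derivedSet_setOf_dvd {a : Ordinal} (ha : a ≠ 0) :
    derivedSet {y | a ∣ y} = {x | x ≠ 0 ∧ a * ω ∣ x} := by
  ext x
  simp only [mem_derivedSet, SuccOrder.accPt_principal, isMin_iff_eq_bot, bot_eq_zero,
    Set.Nonempty, mem_inter_iff, mem_ofPred_eq, mem_Ioo]
  refine and_congr_right fun hx => ⟨fun h => ?_, fun ⟨d, hd⟩ b hb => ?_⟩
  · -- No multiple of `a` lies strictly between `a * u` and `a * succ u`, so `x = a * q` with `q`
    -- a limit ordinal, i.e. a multiple of `ω`.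
    have between : ∀ u, a * u < x → a * succ u < x := fun u hu => by
      obtain ⟨y, hy, huy, hyx⟩ := h _ hu
      exact (mul_succ_le_of_dvd_of_mul_lt hy huy).trans_lt hyx
    have hxq : a * (x / a) = x := (mul_div_le x a).eq_of_not_lt fun hlt =>
      (between _ hlt).not_ge (lt_mul_succ_div x ha).le
    rw [← hxq]
    refine mul_dvd_mul_left a (isSuccPrelimit_iff_omega0_dvd.1 (isSuccPrelimit_of_succ_lt ?_))
    intro u hu
    have := between u (hxq ▸ mul_lt_mul_of_pos_left hu (pos_iff_ne_zero.2 ha))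
    exact lt_of_mul_lt_mul_left' (hxq.symm ▸ this)
  · refine ⟨a * succ (b / a), dvd_mul_right _ _, lt_mul_succ_div b ha, ?_⟩
    rw [hd, mul_assoc]
    refine mul_lt_mul_of_pos_left ?_ (pos_iff_ne_zero.2 ha)
    refine (isSuccPrelimit_iff_omega0_dvd.2 (dvd_mul_right ω d)).succ_lt ?_
    rwa [← lt_mul_iff_div_lt ha, ← mul_assoc, ← hd]

theorem opow_dvd_of_isSuccLimit {b l x : Ordinal} (hb : b ≠ 0) (hl : IsSuccLimit l)
    (h : ∀ γ < l, b ^ γ ∣ x) : b ^ l ∣ x := by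
  rw [dvd_iff_mod_eq_zero]
  by_contra hr
  obtain ⟨γ, hγ, hrγ⟩ := (lt_opow_of_isSuccLimit hb hl).1 (mod_lt x (opow_ne_zero l hb))
  have hdvd : b ^ γ ∣ x % b ^ l := by
    rw [← dvd_add_iff ((opow_dvd_opow b hγ.le).mul_right (x / b ^ l)), div_add_mod]
    exact h γ hγ
  exact hrγ.not_ge (le_of_dvd hr hdvd)

theorem opow_dvd_iff_forall_opow_add_one_dvd {b β x : Ordinal} (hb : b ≠ 0) :
    b ^ β ∣ x ↔ ∀ γ < β, b ^ (γ + 1) ∣ x := by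
  refine ⟨fun h γ hγ => (opow_dvd_opow b (add_one_le_of_lt hγ)).trans h, fun h => ?_⟩
  rcases zero_or_succ_or_isSuccLimit β with rfl | ⟨δ, rfl⟩ | hlim
  · simp
  · simpa using h δ (lt_succ δ)
  · exact opow_dvd_of_isSuccLimit hb hlim fun γ hγ =>
      (opow_dvd_opow b (lt_add_one γ).le).trans (h γ hγ)

theorem insert_zero_iteratedDerivedSet (β : Ordinal.{u}) :
    insert 0 (iteratedDerivedSet Ordinal.{u} β) = {x | ω ^ β ∣ x} := by
  induction β using WellFoundedLT.induction with
  | _ β ih =>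
    have hstep : ∀ γ < β,
        derivedSet (iteratedDerivedSet Ordinal γ) = {x | x ≠ 0 ∧ ω ^ (γ + 1) ∣ x} := by
      intro γ hγ
      rw [← derivedSet_insert 0, ih γ hγ, derivedSet_setOf_dvd (opow_ne_zero _ omega0_ne_zero),
        opow_add_one]
    ext x
    rcases eq_or_ne x 0 with rfl | hx
    · simp
    · rw [iteratedDerivedSet_eq, mem_insert_iff, mem_iInter₂, mem_ofPred_eq,
        opow_dvd_iff_forall_opow_add_one_dvd omega0_ne_zero]
      simp only [hx, false_or]
      exact forall₂_congr fun γ hγ => by rw [hstep γ hγ]; simp [hx]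

theorem derivedSet_iteratedDerivedSet_Iic_opow_add_one (α : Ordinal.{u}) :
    derivedSet (iteratedDerivedSet (Iic (ω ^ (α + 1))) α) = {⊤} := by
  have he : IsOpenEmbedding (Subtype.val : Iic (ω ^ (α + 1)) → Ordinal) := by
    rw [← Order.Iio_succ]
    exact isOpen_Iio.isOpenEmbedding_subtypeVal
  rw [he.iteratedDerivedSet_eq_preimage, he.derivedSet_preimage, ← derivedSet_insert 0,
    insert_zero_iteratedDerivedSet, derivedSet_setOf_dvd (opow_ne_zero _ omega0_ne_zero),
    ← opow_add_one]
  ext ⟨x, hx⟩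
  simp only [mem_preimage, mem_ofPred_eq, mem_singleton_iff, Subtype.ext_iff, Set.Iic.coe_top]
  exact ⟨fun h => le_antisymm hx (le_of_dvd h.1 h.2),
    by rintro rfl; exact ⟨opow_ne_zero _ omega0_ne_zero, dvd_rfl⟩⟩

end Ordinal

open Ordinal

theorem expansive_countable_ordinal_homoclinic (α : Ordinal.{0})
    (m : MetricSpace (Set.Iic (Ordinal.omega0 ^ (α + 1))))
    (hm : m.toUniformSpace.toTopologicalSpace =
      (inferInstance : TopologicalSpace (Set.Iic (Ordinal.omega0 ^ (α + 1)))))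
    (f : (Set.Iic (Ordinal.omega0 ^ (α + 1))) ≃ₜ (Set.Iic (Ordinal.omega0 ^ (α + 1))))
    (c : ℝ) (hc : 0 < c)
    (hexp : ∀ x y : Set.Iic (Ordinal.omega0 ^ (α + 1)), x ≠ y →
      ∃ n : ℤ, c < @dist _ m.toDist ((f.toEquiv ^ n) x) ((f.toEquiv ^ n) y)) :
    ∃ x p : Set.Iic (Ordinal.omega0 ^ (α + 1)), x ≠ p ∧ f p = p ∧
      Tendsto (fun n : ℤ => (f.toEquiv ^ n) x) atTop (nhds p) ∧
      Tendsto (fun n : ℤ => (f.toEquiv ^ n) x) atBot (nhds p) := by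
  have : CompactSpace (Iic (ω ^ (α + 1))) :=
    isCompact_iff_compactSpace.1 (Icc_bot (a := ω ^ (α + 1)) ▸ isCompact_Icc)
  set C := iteratedDerivedSet (Iic (ω ^ (α + 1))) α
  have hC : derivedSet C = {⊤} := derivedSet_iteratedDerivedSet_Iic_opow_add_one α
  have hfC : f ⁻¹' C = C := (f.isOpenEmbedding.iteratedDerivedSet_eq_preimage α).symm
  have hfix : f ⊤ = ⊤ := f.isOpenEmbedding.apply_eq_of_derivedSet_eq_singleton hfC hC
  have hball : @Metric.ball _ m.toPseudoMetricSpace ⊤ c ∈ 𝓝 ⊤ := by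
    convert @Metric.ball_mem_nhds _ m.toPseudoMetricSpace _ _ hc
    exact hm.symm
  have hleave : ∀ x ∈ C, x ≠ ⊤ →
      ∃ n : ℤ, (f.toEquiv ^ n) x ∉ @Metric.ball _ m.toPseudoMetricSpace ⊤ c := by
    intro x _ hx
    obtain ⟨n, hn⟩ := hexp x ⊤ hx
    rw [((show IsFixedPt f.toEquiv ⊤ from hfix).perm_zpow n).eq] at hn
    exact ⟨n, fun h => (@Metric.mem_ball _ m.toPseudoMetricSpace _ _ _ |>.1 h).not_gt hn⟩
  have hbij : BijOn f C C := f.toEquiv.image_eq_iff_bijOn.1 <|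
    (congrArg (f '' ·) hfC).symm.trans (image_preimage_eq C f.surjective)
  obtain ⟨x, -, hx, hlim⟩ :=
    Equiv.Perm.exists_tendsto_cofinite_zpow_apply (σ := f.toEquiv) hbij hC hball hleave
  rw [Int.cofinite_eq, tendsto_sup] at hlim
  exact ⟨x, ⊤, hx, hfix, hlim.2, hlim.1⟩
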